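/- (Limits of fixed-state thermal channels are thermal.) Let (φ_R^z)_{z>0} be a family of full-rank density matrices on ℂ^{d_R} with φ_R := lim_{z→0} φ_R^z, and suppose the corresponding thermal channels with respect to φ_R^z converge: T := lim_{z→0} T^{(φ_R^z)}. Then T is a thermal channel with respect to φ_R, i.e., T is an optimizer of the problem: maximize S(B|R)_{(N⊗id_R)(φ_R^{1/2} Φ_{A:R} φ_R^{1/2})} over quantum channels N_{A→B} subject to tr[C^j J(N)] = q_j for all j. -/

import Mathlib

/-!
Both sides of the optimality inequality depend continuously on the pair (channel, input state):
`N ⊗ id` is linear in the Choi matrix of `N`, and the square root and `x log x` enter through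
the continuous functional calculus, which is continuous along convergent sequences of Hermitian
matrices. Feasibility (complete positivity, trace preservation and the linear constraints) is a
closed condition on Choi matrices. So the limit `T` is feasible, and for every feasible `N`
the inequality between the conditional entropies of `N` and `T_z` at the input state built from
`φ_z` passes to the limit `z → 0`.
-/

open Matrix BigOperators MeasureTheory
open scoped Kronecker ComplexOrder

noncomputable section

namespace ThermalChannel

/-- Square complex matrices of size `d`. -/
abbrev Mat (d : ℕ) := Matrix (Fin d) (Fin d) ℂ

/-- A density matrix: positive semidefinite with unit trace. -/
def IsDensity {ι : Type*} [Fintype ι] (ρ : Matrix ι ι ℂ) : Prop :=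
  ρ.PosSemidef ∧ ρ.trace = 1

/-- The map `L ⊗ id_R` applied to a matrix on `A × R`. -/
def extendId {A B R : Type*} [Fintype A] [Fintype B] [Fintype R]
    (L : Matrix A A ℂ →ₗ[ℂ] Matrix B B ℂ)
    (M : Matrix (A × R) (A × R) ℂ) : Matrix (B × R) (B × R) ℂ :=
  Matrix.of fun p q => L (Matrix.of fun x y => M (x, p.2) (y, q.2)) p.1 q.1

/-- A quantum channel: a completely positive trace-preserving linear map. -/
def IsChannel {A B : Type*} [Fintype A] [Fintype B]
    (L : Matrix A A ℂ →ₗ[ℂ] Matrix B B ℂ) : Prop :=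
  (∀ (k : ℕ) (M : Matrix (A × Fin k) (A × Fin k) ℂ), M.PosSemidef →
    (extendId L M).PosSemidef) ∧
  (∀ M, (L M).trace = M.trace)

/-- The (unnormalized) maximally entangled projector `|Φ⟩⟨Φ|`,
`|Φ⟩ = ∑ j |j⟩|j⟩`. -/
def PhiMat (A : Type*) [DecidableEq A] : Matrix (A × A) (A × A) ℂ :=
  Matrix.of fun p q => if p.1 = p.2 ∧ q.1 = q.2 then 1 else 0

/-- The Choi matrix `J(L) = (L ⊗ id)(Φ)`. -/
def choi {A B : Type*} [Fintype A] [DecidableEq A] [Fintype B]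
    (L : Matrix A A ℂ →ₗ[ℂ] Matrix B B ℂ) : Matrix (B × A) (B × A) ℂ :=
  extendId L (PhiMat A)

/-- Partial trace over the first tensor factor. -/
def ptraceFst {B R : Type*} [Fintype B] (M : Matrix (B × R) (B × R) ℂ) :
    Matrix R R ℂ :=
  Matrix.of fun x y => ∑ b, M (b, x) (b, y)

/-- Partial trace over the second tensor factor. -/
def ptraceSnd {B R : Type*} [Fintype R] (M : Matrix (B × R) (B × R) ℂ) :
    Matrix B B ℂ :=
  Matrix.of fun x y => ∑ r, M (x, r) (y, r)

open Classical in
/-- Functional calculus for Hermitian matrices (junk value `0` for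
non-Hermitian matrices): apply `f` to the eigenvalues. -/
def mfun {ι : Type*} [Fintype ι] [DecidableEq ι] (f : ℝ → ℝ) (M : Matrix ι ι ℂ) :
    Matrix ι ι ℂ :=
  if h : M.IsHermitian then
    (h.eigenvectorUnitary : Matrix ι ι ℂ) *
      Matrix.diagonal (fun i => (f (h.eigenvalues i) : ℂ)) *
      star (h.eigenvectorUnitary : Matrix ι ι ℂ)
  else 0

/-- Matrix square root (of a positive semidefinite matrix). -/
def msqrt {ι : Type*} [Fintype ι] [DecidableEq ι] (M : Matrix ι ι ℂ) : Matrix ι ι ℂ :=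
  mfun Real.sqrt M

open Classical in
/-- Moore–Penrose pseudo-inverse square root of a positive semidefinite matrix. -/
def minvsqrt {ι : Type*} [Fintype ι] [DecidableEq ι] (M : Matrix ι ι ℂ) : Matrix ι ι ℂ :=
  mfun (fun x => if x = 0 then 0 else (Real.sqrt x)⁻¹) M

open Classical in
/-- Orthogonal projector onto the support. -/
def suppProj {ι : Type*} [Fintype ι] [DecidableEq ι] (M : Matrix ι ι ℂ) : Matrix ι ι ℂ :=
  mfun (fun x => if x = 0 then 0 else 1) M

/-- Matrix logarithm, taken spectrally on the support (`log 0 := 0`). -/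
def mlog {ι : Type*} [Fintype ι] [DecidableEq ι] (M : Matrix ι ι ℂ) : Matrix ι ι ℂ :=
  mfun Real.log M

/-- `M log M`, defined spectrally with `0 log 0 := 0`. -/
def xlogx {ι : Type*} [Fintype ι] [DecidableEq ι] (M : Matrix ι ι ℂ) : Matrix ι ι ℂ :=
  mfun (fun x => x * Real.log x) M

/-- Matrix exponential (of a Hermitian matrix). -/
def mexp {ι : Type*} [Fintype ι] [DecidableEq ι] (M : Matrix ι ι ℂ) : Matrix ι ι ℂ :=
  mfun Real.exp M

open Classical in
/-- Von Neumann entropy `S(ρ) = -∑ λᵢ log λᵢ` (junk value `0` for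
non-Hermitian matrices); `0 log 0 := 0` since `Real.log 0 = 0`. -/
def vnEntropy {ι : Type*} [Fintype ι] [DecidableEq ι] (M : Matrix ι ι ℂ) : ℝ :=
  if h : M.IsHermitian then -∑ i, h.eigenvalues i * Real.log (h.eigenvalues i) else 0

/-- Conditional entropy `S(B|R)_τ = S(τ) - S(tr_B τ)`. -/
def condEntropy {B R : Type*} [Fintype B] [Fintype R] [DecidableEq B] [DecidableEq R]
    (τ : Matrix (B × R) (B × R) ℂ) : ℝ :=
  vnEntropy τ - vnEntropy (ptraceFst τ)

/-- The channel entropy `S(N) = min_{ρ_{AR}} S(B|R)_{(N ⊗ id)(ρ_{AR})}`. -/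
def channelEntropy {A B : Type*} [Fintype A] [Fintype B] [DecidableEq A] [DecidableEq B]
    (L : Matrix A A ℂ →ₗ[ℂ] Matrix B B ℂ) : ℝ :=
  sInf {x | ∃ ρ : Matrix (A × A) (A × A) ℂ, IsDensity ρ ∧ x = condEntropy (extendId L ρ)}

/-- The pure state `|φ⟩⟨φ|` with `|φ⟩ = φ_R^{1/2} |Φ_{A:R}⟩`, the square root
acting on the reference factor `R`. -/
def stateAR {A : Type*} [Fintype A] [DecidableEq A] (φR : Matrix A A ℂ) :
    Matrix (A × A) (A × A) ℂ :=
  ((1 : Matrix A A ℂ) ⊗ₖ msqrt φR) * PhiMat A * ((1 : Matrix A A ℂ) ⊗ₖ msqrt φR)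

/-- A channel is feasible if it reproduces the prescribed expectation values
`tr[C^j J(N)] = q_j`. -/
def Feasible {dA dB J : ℕ} (C : Fin J → Matrix (Fin dB × Fin dA) (Fin dB × Fin dA) ℂ)
    (q : Fin J → ℝ) (L : Mat dA →ₗ[ℂ] Mat dB) : Prop :=
  IsChannel L ∧ ∀ j, (C j * choi L).trace = (q j : ℂ)

/-- A thermal quantum channel: an optimizer of the maximum channel entropy
problem. -/
def IsThermalChannel {dA dB J : ℕ}
    (C : Fin J → Matrix (Fin dB × Fin dA) (Fin dB × Fin dA) ℂ) (q : Fin J → ℝ)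
    (T : Mat dA →ₗ[ℂ] Mat dB) : Prop :=
  Feasible C q T ∧ ∀ L, Feasible C q L → channelEntropy L ≤ channelEntropy T


/-- `T` is an optimizer of the thermal-channel problem with respect to the
fixed input state `φ_R`. -/
def OptimalFor {dA dB J : ℕ}
    (C : Fin J → Matrix (Fin dB × Fin dA) (Fin dB × Fin dA) ℂ) (q : Fin J → ℝ)
    (φR : Mat dA) (T : Mat dA →ₗ[ℂ] Mat dB) : Prop :=
  Feasible C q T ∧ ∀ N, Feasible C q N →
    condEntropy (extendId N (stateAR φR)) ≤ condEntropy (extendId T (stateAR φR))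

open Filter Topology

section SpectralCalculus

variable {ι : Type*} [Fintype ι] [DecidableEq ι]

theorem mfun_eq_cfc {M : Matrix ι ι ℂ} (hM : M.IsHermitian) (f : ℝ → ℝ) :
    mfun f M = cfc f M := by
  rw [hM.cfc_eq, IsHermitian.cfc, Unitary.conjStarAlgAut_apply, mfun, dif_pos hM]
  rfl

theorem vnEntropy_eq_neg_re_trace_cfc {M : Matrix ι ι ℂ} (hM : M.IsHermitian) :
    vnEntropy M = -(cfc (fun x => x * Real.log x) M).trace.re := by
  rw [hM.cfc_eq, IsHermitian.cfc, Unitary.conjStarAlgAut_apply, trace_mul_cycle,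
    Unitary.coe_star_mul_self, one_mul, trace_diagonal, vnEntropy, dif_pos hM]
  simp

variable {α : Type*} {l : Filter α} {F : α → Matrix ι ι ℂ} {M : Matrix ι ι ℂ}

theorem tendsto_cfc_of_isHermitian (hlim : Tendsto F l (𝓝 M))
    (hF : ∀ᶠ x in l, (F x).IsHermitian) (hM : M.IsHermitian) {f : ℝ → ℝ} (hf : Continuous f) :
    Tendsto (fun x => cfc f (F x)) l (𝓝 (cfc f M)) := by
  -- The L2 operator norm induces the entrywise topology and makes the spectra of the `F x`
  -- eventually lie in a common compact ball (the factor `‖1‖` only matters for empty `ι`).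
  open scoped Matrix.Norms.L2Operator in (
  have hbound : ∀ᶠ x in l, ‖F x‖ ≤ ‖M‖ + 1 :=
    (hlim.norm.eventually (gt_mem_nhds (lt_add_one ‖M‖))).mono fun _ => le_of_lt
  have hspec : ∀ {N : Matrix ι ι ℂ}, ‖N‖ ≤ ‖M‖ + 1 →
      spectrum ℝ N ⊆ Metric.closedBall 0 ((‖M‖ + 1) * ‖(1 : Matrix ι ι ℂ)‖) := fun hN =>
    (spectrum.subset_closedBall_norm_mul _).trans
      (Metric.closedBall_subset_closedBall (by gcongr))
  exact hlim.cfc (isCompact_closedBall 0 _) f (hbound.mono fun _ => hspec)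
    (hF.mono fun _ h => h.isSelfAdjoint) (hspec (by linarith)) hM.isSelfAdjoint
    hf.continuousOn)

theorem tendsto_mfun (hlim : Tendsto F l (𝓝 M)) (hF : ∀ᶠ x in l, (F x).IsHermitian)
    (hM : M.IsHermitian) {f : ℝ → ℝ} (hf : Continuous f) :
    Tendsto (fun x => mfun f (F x)) l (𝓝 (mfun f M)) := by
  rw [mfun_eq_cfc hM]
  exact (tendsto_cfc_of_isHermitian hlim hF hM hf).congr'
    (hF.mono fun x hx => (mfun_eq_cfc hx f).symm)

theorem tendsto_vnEntropy (hlim : Tendsto F l (𝓝 M))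
    (hF : ∀ᶠ x in l, (F x).IsHermitian) (hM : M.IsHermitian) :
    Tendsto (fun x => vnEntropy (F x)) l (𝓝 (vnEntropy M)) := by
  have htrace := (Complex.continuous_re.comp (continuous_id.matrix_trace)).tendsto _ |>.comp
    (tendsto_cfc_of_isHermitian hlim hF hM Real.continuous_mul_log)
  rw [vnEntropy_eq_neg_re_trace_cfc hM]
  exact htrace.neg.congr' (hF.mono fun x hx => (vnEntropy_eq_neg_re_trace_cfc hx).symm)

end SpectralCalculus

section Limits

variable {ι α : Type*} {l : Filter α} [l.NeBot] {F : α → Matrix ι ι ℂ} {M : Matrix ι ι ℂ}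

theorem isHermitian_of_tendsto (hlim : Tendsto F l (𝓝 M))
    (hF : ∀ᶠ x in l, (F x).IsHermitian) : M.IsHermitian :=
  (isClosed_eq continuous_id.matrix_conjTranspose continuous_id).mem_of_tendsto hlim hF

theorem posSemidef_of_tendsto [Fintype ι] (hlim : Tendsto F l (𝓝 M))
    (hF : ∀ᶠ x in l, (F x).PosSemidef) : M.PosSemidef := by
  refine .of_dotProduct_mulVec_nonneg
    (isHermitian_of_tendsto hlim (hF.mono fun _ h => h.isHermitian)) fun v => ?_
  have hcont : Continuous fun X : Matrix ι ι ℂ => star v ⬝ᵥ (X *ᵥ v) :=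
    continuous_const.dotProduct (continuous_id.matrix_mulVec continuous_const)
  exact ge_of_tendsto ((hcont.tendsto M).comp hlim)
    (hF.mono fun _ h => h.dotProduct_mulVec_nonneg v)

end Limits

section Choi

variable {A B : Type*} [Fintype A] [DecidableEq A] [Fintype B]

theorem choi_apply (L : Matrix A A ℂ →ₗ[ℂ] Matrix B B ℂ) (a a' : A) (x y : B) :
    choi L (x, a) (y, a') = L (Matrix.single a a' 1) x y := by
  have hslice : (Matrix.of fun u v => PhiMat A (u, a) (v, a')) = Matrix.single a a' 1 := by
    ext u v
    simp only [Matrix.of_apply, PhiMat, Matrix.single]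
    exact if_congr (and_congr eq_comm eq_comm) rfl rfl
  exact congrArg (fun X => L X x y) hslice

theorem apply_eq_sum_choi (L : Matrix A A ℂ →ₗ[ℂ] Matrix B B ℂ) (M : Matrix A A ℂ) (x y : B) :
    L M x y = ∑ a, ∑ a', M a a' * choi L (x, a) (y, a') := by
  have hsingle : ∀ a a', Matrix.single a a' (M a a') = M a a' • Matrix.single a a' 1 := by
    simp [Matrix.smul_single]
  conv_lhs => rw [Matrix.matrix_eq_sum_single M]
  simp only [hsingle, map_sum, map_smul, Matrix.sum_apply, Matrix.smul_apply, smul_eq_mul,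
    choi_apply]

variable {α : Type*} {l : Filter α} {Lz : α → (Matrix A A ℂ →ₗ[ℂ] Matrix B B ℂ)}
  {L : Matrix A A ℂ →ₗ[ℂ] Matrix B B ℂ}

theorem tendsto_apply_of_tendsto_choi (hL : Tendsto (fun x => choi (Lz x)) l (𝓝 (choi L)))
    (M : Matrix A A ℂ) : Tendsto (fun x => Lz x M) l (𝓝 (L M)) := by
  refine tendsto_pi_nhds.mpr fun x => tendsto_pi_nhds.mpr fun y => ?_
  simp only [apply_eq_sum_choi _ M]
  refine tendsto_finsetSum _ fun a _ => tendsto_finsetSum _ fun a' _ => ?_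
  exact tendsto_const_nhds.mul ((continuous_apply_apply _ _).tendsto _ |>.comp hL)

theorem tendsto_extendId {R : Type*} [Fintype R] {Mz : α → Matrix (A × R) (A × R) ℂ}
    {M : Matrix (A × R) (A × R) ℂ} (hL : Tendsto (fun x => choi (Lz x)) l (𝓝 (choi L)))
    (hM : Tendsto Mz l (𝓝 M)) :
    Tendsto (fun x => extendId (Lz x) (Mz x)) l (𝓝 (extendId L M)) := by
  refine tendsto_pi_nhds.mpr fun p => tendsto_pi_nhds.mpr fun q => ?_
  simp only [extendId, Matrix.of_apply, apply_eq_sum_choi]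
  refine tendsto_finsetSum _ fun a _ => tendsto_finsetSum _ fun a' _ => ?_
  exact ((continuous_apply_apply _ _).tendsto _ |>.comp hM).mul
    ((continuous_apply_apply _ _).tendsto _ |>.comp hL)

theorem IsChannel.of_tendsto_choi [l.NeBot]
    (hL : Tendsto (fun x => choi (Lz x)) l (𝓝 (choi L))) (hLz : ∀ᶠ x in l, IsChannel (Lz x)) :
    IsChannel L := by
  refine ⟨fun k M hM => ?_, fun M => ?_⟩
  · exact posSemidef_of_tendsto (tendsto_extendId hL tendsto_const_nhds)
      (hLz.mono fun x hx => hx.1 k M hM)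
  · refine tendsto_nhds_unique ((continuous_id.matrix_trace.tendsto _).comp
      (tendsto_apply_of_tendsto_choi hL M)) (tendsto_const_nhds.congr' ?_)
    exact hLz.mono fun x hx => (hx.2 M).symm

end Choi

theorem Feasible.of_tendsto_choi {dA dB J : ℕ}
    {C : Fin J → Matrix (Fin dB × Fin dA) (Fin dB × Fin dA) ℂ} {q : Fin J → ℝ}
    {α : Type*} {l : Filter α} [l.NeBot] {Lz : α → (Mat dA →ₗ[ℂ] Mat dB)} {L : Mat dA →ₗ[ℂ] Mat dB}
    (hL : Tendsto (fun x => choi (Lz x)) l (𝓝 (choi L))) (hLz : ∀ᶠ x in l, Feasible C q (Lz x)) :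
    Feasible C q L := by
  refine ⟨IsChannel.of_tendsto_choi hL (hLz.mono fun _ h => h.1), fun j => ?_⟩
  have hcont : Continuous fun X : Matrix (Fin dB × Fin dA) (Fin dB × Fin dA) ℂ =>
      (C j * X).trace := (continuous_const.matrix_mul continuous_id).matrix_trace
  exact tendsto_nhds_unique ((hcont.tendsto _).comp hL)
    (tendsto_const_nhds.congr' (hLz.mono fun _ h => (h.2 j).symm))

section State

variable {A : Type*} [DecidableEq A]

theorem PhiMat_eq_vecMulVec :
    PhiMat A = vecMulVec (fun p : A × A => if p.1 = p.2 then 1 else 0)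
      (star fun p : A × A => if p.1 = p.2 then 1 else 0) := by
  ext p q
  by_cases hp : p.1 = p.2 <;> by_cases hq : q.1 = q.2 <;> simp [PhiMat, vecMulVec_apply, hp, hq]

variable [Fintype A]

theorem posSemidef_PhiMat : (PhiMat A).PosSemidef := by
  rw [PhiMat_eq_vecMulVec]
  exact posSemidef_vecMulVec_self_star _

theorem stateAR_posSemidef {φ : Matrix A A ℂ} (hφ : φ.IsHermitian) :
    (stateAR φ).PosSemidef := by
  have hsqrt : (msqrt φ).IsHermitian := by
    rw [msqrt, mfun_eq_cfc hφ]
    exact cfc_predicate _ _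
  have hkron : ((1 : Matrix A A ℂ) ⊗ₖ msqrt φ)ᴴ = 1 ⊗ₖ msqrt φ := by
    rw [conjTranspose_kronecker, conjTranspose_one, hsqrt.eq]
  simpa only [stateAR, hkron] using
    posSemidef_PhiMat.mul_mul_conjTranspose_same ((1 : Matrix A A ℂ) ⊗ₖ msqrt φ)

theorem tendsto_stateAR {α : Type*} {l : Filter α} {φz : α → Matrix A A ℂ} {φ : Matrix A A ℂ}
    (hlim : Tendsto φz l (𝓝 φ)) (hφz : ∀ᶠ x in l, (φz x).IsHermitian) (hφ : φ.IsHermitian) :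
    Tendsto (fun x => stateAR (φz x)) l (𝓝 (stateAR φ)) := by
  have hkron : Continuous fun S : Matrix A A ℂ => (1 : Matrix A A ℂ) ⊗ₖ S :=
    continuous_matrix fun p q => continuous_const.mul (continuous_id.matrix_elem _ _)
  have hsqrt := (hkron.tendsto _).comp (tendsto_mfun hlim hφz hφ Real.continuous_sqrt)
  exact (hsqrt.mul tendsto_const_nhds).mul hsqrt

end State

section ConditionalEntropy

variable {B R : Type*} [Fintype B]

theorem isHermitian_ptraceFst {M : Matrix (B × R) (B × R) ℂ} (hM : M.IsHermitian) :
    (ptraceFst M).IsHermitian := by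
  ext x y
  simp only [conjTranspose_apply, ptraceFst, of_apply, star_sum]
  exact Finset.sum_congr rfl fun b _ => congrFun (congrFun hM.eq (b, x)) (b, y)

theorem continuous_ptraceFst :
    Continuous (ptraceFst : Matrix (B × R) (B × R) ℂ → Matrix R R ℂ) :=
  continuous_matrix fun _ _ => continuous_finsetSum _ fun _ _ => continuous_id.matrix_elem _ _

theorem tendsto_condEntropy [Fintype R] [DecidableEq B] [DecidableEq R] {α : Type*} {l : Filter α}
    {F : α → Matrix (B × R) (B × R) ℂ} {M : Matrix (B × R) (B × R) ℂ}
    (hlim : Tendsto F l (𝓝 M)) (hF : ∀ᶠ x in l, (F x).IsHermitian) (hM : M.IsHermitian) :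
    Tendsto (fun x => condEntropy (F x)) l (𝓝 (condEntropy M)) :=
  (tendsto_vnEntropy hlim hF hM).sub (tendsto_vnEntropy
    ((continuous_ptraceFst.tendsto _).comp hlim) (hF.mono fun _ => isHermitian_ptraceFst)
    (isHermitian_ptraceFst hM))

end ConditionalEntropy

theorem IsChannel.isHermitian_extendId_stateAR {dA dB : ℕ} {L : Mat dA →ₗ[ℂ] Mat dB}
    (hL : IsChannel L) {φ : Mat dA} (hφ : φ.IsHermitian) :
    (extendId L (stateAR φ)).IsHermitian :=
  (hL.1 dA _ (stateAR_posSemidef hφ)).isHermitian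

theorem tendsto_condEntropy_extendId_stateAR {dA dB : ℕ} {α : Type*} {l : Filter α}
    {Lz : α → (Mat dA →ₗ[ℂ] Mat dB)} {L : Mat dA →ₗ[ℂ] Mat dB} {φz : α → Mat dA} {φ : Mat dA}
    (hL : Tendsto (fun x => choi (Lz x)) l (𝓝 (choi L))) (hLz : ∀ᶠ x in l, IsChannel (Lz x))
    (hLc : IsChannel L) (hlim : Tendsto φz l (𝓝 φ)) (hφz : ∀ᶠ x in l, (φz x).IsHermitian)
    (hφ : φ.IsHermitian) :
    Tendsto (fun x => condEntropy (extendId (Lz x) (stateAR (φz x)))) l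
      (𝓝 (condEntropy (extendId L (stateAR φ)))) :=
  tendsto_condEntropy (tendsto_extendId hL (tendsto_stateAR hlim hφz hφ))
    ((hLz.and hφz).mono fun _ h => h.1.isHermitian_extendId_stateAR h.2)
    (hLc.isHermitian_extendId_stateAR hφ)

theorem limit_of_fixed_state_thermal_channels_general
    {dA dB J : ℕ}
    (C : Fin J → Matrix (Fin dB × Fin dA) (Fin dB × Fin dA) ℂ)
    (q : Fin J → ℝ)
    (φz : ℝ → Mat dA)
    (hφz : ∀ z : ℝ, 0 < z → IsDensity (φz z) ∧ (φz z).PosDef)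
    (Tz : ℝ → (Mat dA →ₗ[ℂ] Mat dB))
    (hTz : ∀ z : ℝ, 0 < z → OptimalFor C q (φz z) (Tz z))
    (φR : Mat dA)
    (hφlim : Filter.Tendsto φz (nhdsWithin 0 (Set.Ioi 0)) (nhds φR))
    (T : Mat dA →ₗ[ℂ] Mat dB)
    (hTlim : Filter.Tendsto (fun z => choi (Tz z)) (nhdsWithin 0 (Set.Ioi 0))
      (nhds (choi T))) :
    OptimalFor C q φR T := by
  have hpos : ∀ᶠ z in 𝓝[>] (0 : ℝ), 0 < z := self_mem_nhdsWithin
  have hherm : ∀ᶠ z in 𝓝[>] (0 : ℝ), (φz z).IsHermitian :=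
    hpos.mono fun z hz => (hφz z hz).2.isHermitian
  have hφR : φR.IsHermitian := isHermitian_of_tendsto hφlim hherm
  have hT : Feasible C q T := .of_tendsto_choi hTlim (hpos.mono fun z hz => (hTz z hz).1)
  refine ⟨hT, fun N hN => le_of_tendsto_of_tendsto ?_ ?_ (hpos.mono fun z hz => (hTz z hz).2 N hN)⟩
  · exact tendsto_condEntropy_extendId_stateAR tendsto_const_nhds (.of_forall fun _ => hN.1) hN.1
      hφlim hherm hφR
  · exact tendsto_condEntropy_extendId_stateAR hTlim (hpos.mono fun z hz => (hTz z hz).1.1) hT.1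
      hφlim hherm hφR

/-- **Limits of fixed-state thermal channels are thermal.**  If full-rank
density matrices `φ_R^z → φ_R` as `z → 0⁺` and the corresponding fixed-state
thermal channels converge (entrywise on the Choi matrices) to a channel `T`,
then `T` is a thermal channel with respect to `φ_R`. -/
theorem limit_of_fixed_state_thermal_channels
    {dA dB J : ℕ}
    (C : Fin J → Matrix (Fin dB × Fin dA) (Fin dB × Fin dA) ℂ)
    (hC : ∀ j, (C j).IsHermitian) (q : Fin J → ℝ)
    (hfeas : ∃ N, Feasible C q N)
    (φz : ℝ → Mat dA)
    (hφz : ∀ z : ℝ, 0 < z → IsDensity (φz z) ∧ (φz z).PosDef)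
    (Tz : ℝ → (Mat dA →ₗ[ℂ] Mat dB))
    (hTz : ∀ z : ℝ, 0 < z → OptimalFor C q (φz z) (Tz z))
    (φR : Mat dA)
    (hφlim : Filter.Tendsto φz (nhdsWithin 0 (Set.Ioi 0)) (nhds φR))
    (T : Mat dA →ₗ[ℂ] Mat dB)
    (hTlim : Filter.Tendsto (fun z => choi (Tz z)) (nhdsWithin 0 (Set.Ioi 0))
      (nhds (choi T))) :
    OptimalFor C q φR T :=
  limit_of_fixed_state_thermal_channels_general C q φz hφz Tz hTz φR hφlim T hTlim

end ThermalChannel
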